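/- arXiv:2301.11383 — 2 statements merged into one kernel-verified Lean document; each statement's English description precedes it below -/
import Mathlib

section
/- For all a, b ∈ ℕ and all integers i, j ≥ 0 with i+j ≤ a and i+j ≤ b: CG(a/2, a/2−i; b/2, b/2−j | (a+b)/2−i−j, (a+b)/2−i−j) = (−1)^i·√((a+b−2i−2j+1)!·(i+j)!·(a−i)!·(b−j)!/((a+b−i−j+1)!·(a−i−j)!·(b−i−j)!·i!·j!)). -/
noncomputable section

/-- Extended factorial of a rational number: `q!` if `q` is a nonnegative integer,
and `0` otherwise. -/
def qfact (q : ℚ) : ℝ :=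
  if q.den = 1 ∧ 0 ≤ q.num then (q.num.toNat).factorial else 0

/-- `(-1)^q` for an integer rational `q` (junk value `1` otherwise). -/
def qsign (q : ℚ) : ℝ := if q.den = 1 then (-1 : ℝ) ^ q.num else 1

/-- The triangle coefficient `Δ(j₁,j₂,j₃)`: defined by the factorial formula when
`j₁+j₂+j₃ ∈ ℤ` and `|j₁-j₂| ≤ j₃ ≤ j₁+j₂` (the triangle condition), and `0` otherwise. -/
def cgDelta (j1 j2 j3 : ℚ) : ℝ :=
  if (j1 + j2 + j3).den = 1 ∧ |j1 - j2| ≤ j3 ∧ j3 ≤ j1 + j2 then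
    Real.sqrt (qfact (j1 + j2 - j3) * qfact (j1 - j2 + j3) * qfact (-j1 + j2 + j3)
      / qfact (j1 + j2 + j3 + 1))
  else 0

/-- The main Clebsch–Gordan formula (used when `m₃ ≥ 0` and `j₁ ≥ j₂`).  Terms of the sum
in which some factorial argument is not a nonnegative integer vanish, since `qfact` is then `0`
and division by zero is zero; the summation range contains all integers `r ≥ 0` with
`j₁+j₂-j₃-r ≥ 0`. -/
def CGmain (j1 m1 j2 m2 j3 m3 : ℚ) : ℝ :=
  cgDelta j1 j2 j3 * Real.sqrt (2 * (j3 : ℝ) + 1) *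
    Real.sqrt (qfact (j1 + m1) * qfact (j1 - m1) * qfact (j2 + m2) * qfact (j2 - m2) *
      qfact (j3 + m3) * qfact (j3 - m3)) *
    ∑ r ∈ Finset.range ((j1 + j2 - j3).num.toNat + 1),
      (-1 : ℝ) ^ r /
        ((r.factorial : ℝ) * qfact (j1 + j2 - j3 - (r : ℚ)) * qfact (j1 - m1 - (r : ℚ)) *
          qfact (j2 + m2 - (r : ℚ)) * qfact (j3 - j2 + m1 + (r : ℚ)) *
          qfact (j3 - j1 - m2 + (r : ℚ)))

/-- The Clebsch–Gordan coefficient `CG(j₁,m₁;j₂,m₂|j₃,m₃)`.  It vanishes unless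
`m₁+m₂ = m₃`, `|mᵢ| ≤ jᵢ` and `jᵢ+mᵢ ∈ ℤ` for `i = 1,2,3`; when these hold it is given by
the main formula if `m₃ ≥ 0` and `j₁ ≥ j₂`, and extended by the symmetries
`CG(j₁,m₁;j₂,m₂|j₃,m₃) = (-1)^{j₁+j₂-j₃} CG(j₁,-m₁;j₂,-m₂|j₃,-m₃)` (for `m₃ < 0`) and
`CG(j₁,m₁;j₂,m₂|j₃,m₃) = (-1)^{j₁+j₂-j₃} CG(j₂,m₂;j₁,m₁|j₃,m₃)` (for `j₁ < j₂`). -/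
def CG (j1 m1 j2 m2 j3 m3 : ℚ) : ℝ :=
  if m1 + m2 = m3 ∧ |m1| ≤ j1 ∧ |m2| ≤ j2 ∧ |m3| ≤ j3
      ∧ (j1 + m1).den = 1 ∧ (j2 + m2).den = 1 ∧ (j3 + m3).den = 1 then
    if 0 ≤ m3 then
      if j2 ≤ j1 then CGmain j1 m1 j2 m2 j3 m3
      else qsign (j1 + j2 - j3) * CGmain j2 m2 j1 m1 j3 m3
    else
      qsign (j1 + j2 - j3) *
        (if j2 ≤ j1 then CGmain j1 (-m1) j2 (-m2) j3 (-m3)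
         else qsign (j1 + j2 - j3) * CGmain j2 (-m2) j1 (-m1) j3 (-m3))
  else 0

lemma qfact_natCast (n : ℕ) : qfact (n : ℚ) = n.factorial := by simp [qfact]

lemma qfact_zero : qfact 0 = 1 := by simpa using qfact_natCast 0

lemma qfact_of_neg {q : ℚ} (h : q < 0) : qfact q = 0 := by
  have : q.num < 0 := Rat.num_neg.mpr h
  simp [qfact, not_le.mpr this]

lemma qsign_natCast (n : ℕ) : qsign (n : ℚ) = (-1:ℝ)^n := by
  simp [qsign, zpow_natCast]

lemma CGmain_extremal (a b i j : ℕ) (hia : i + j ≤ a) (hjb : i + j ≤ b)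
    (c : ℚ) (hc : c = ((a : ℚ) + (b : ℚ)) / 2 - (i : ℚ) - (j : ℚ)) :
    CGmain ((a : ℚ) / 2) ((a : ℚ) / 2 - (i : ℚ)) ((b : ℚ) / 2) ((b : ℚ) / 2 - (j : ℚ)) c c
      = (-1 : ℝ) ^ i *
          Real.sqrt
            (((a + b - 2 * i - 2 * j + 1).factorial : ℝ) * ((i + j).factorial : ℝ)
                * ((a - i).factorial : ℝ) * ((b - j).factorial : ℝ) /
              (((a + b - i - j + 1).factorial : ℝ) * ((a - i - j).factorial : ℝ)
                * ((b - i - j).factorial : ℝ) * (i.factorial : ℝ) * (j.factorial : ℝ))) := by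
  subst hc
  have hca : (i:ℚ) + (j:ℚ) ≤ (a:ℚ) := by exact_mod_cast hia
  have hcb : (i:ℚ) + (j:ℚ) ≤ (b:ℚ) := by exact_mod_cast hjb
  have hi0 : (0:ℚ) ≤ i := by positivity
  have hj0 : (0:ℚ) ≤ j := by positivity
  have E1 : (a:ℚ)/2 + (b:ℚ)/2 - (((a:ℚ)+(b:ℚ))/2 - i - j) = ((i+j : ℕ):ℚ) := by
    push_cast; ring
  have E2 : (a:ℚ)/2 - (b:ℚ)/2 + (((a:ℚ)+(b:ℚ))/2 - i - j) = ((a - i - j : ℕ):ℚ) := by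
    rw [show a - i - j = a - (i+j) from by omega, Nat.cast_sub hia]; push_cast; ring
  have E3 : -((a:ℚ)/2) + (b:ℚ)/2 + (((a:ℚ)+(b:ℚ))/2 - i - j) = ((b - i - j : ℕ):ℚ) := by
    rw [show b - i - j = b - (i+j) from by omega, Nat.cast_sub hjb]; push_cast; ring
  have E4 : (a:ℚ)/2 + (b:ℚ)/2 + (((a:ℚ)+(b:ℚ))/2 - i - j) + 1 = ((a + b - i - j + 1 : ℕ):ℚ) := by
    rw [show a + b - i - j + 1 = a + b - (i+j) + 1 from by omega,
      Nat.cast_add, Nat.cast_sub (le_trans hia (Nat.le_add_right a b))]; push_cast; ring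
  have E5 : (a:ℚ)/2 + ((a:ℚ)/2 - i) = ((a - i : ℕ):ℚ) := by
    rw [Nat.cast_sub (by omega : i ≤ a)]; ring
  have E6 : (a:ℚ)/2 - ((a:ℚ)/2 - i) = ((i : ℕ):ℚ) := by ring
  have E7 : (b:ℚ)/2 + ((b:ℚ)/2 - j) = ((b - j : ℕ):ℚ) := by
    rw [Nat.cast_sub (by omega : j ≤ b)]; ring
  have E8 : (b:ℚ)/2 - ((b:ℚ)/2 - j) = ((j : ℕ):ℚ) := by ring
  have E9 : ((a:ℚ)+(b:ℚ))/2 - i - j + (((a:ℚ)+(b:ℚ))/2 - i - j) = ((a + b - 2*i - 2*j : ℕ):ℚ) := by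
    rw [show a + b - 2*i - 2*j = a + b - (2*i+2*j) from by omega,
      Nat.cast_sub (by omega : 2*i+2*j ≤ a+b)]; push_cast; ring
  have E10 : ((a:ℚ)+(b:ℚ))/2 - i - j - (((a:ℚ)+(b:ℚ))/2 - i - j) = (0:ℚ) := by ring
  have E11 : ((a:ℚ)+(b:ℚ))/2 - i - j - (b:ℚ)/2 + ((a:ℚ)/2 - i) = (a:ℚ) - 2*i - j := by ring
  have E12 : ((a:ℚ)+(b:ℚ))/2 - i - j - (a:ℚ)/2 - ((b:ℚ)/2 - j) = -(i:ℚ) := by ring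
  have E4' : (a:ℚ)/2 + (b:ℚ)/2 + (((a:ℚ)+(b:ℚ))/2 - i - j) = ((a + b - i - j : ℕ):ℚ) := by
    rw [show a + b - i - j = a + b - (i+j) from by omega,
      Nat.cast_sub (le_trans hia (Nat.le_add_right a b))]; push_cast; ring
  unfold CGmain cgDelta
  have hcond : ((a:ℚ)/2 + (b:ℚ)/2 + (((a:ℚ)+(b:ℚ))/2 - i - j)).den = 1 ∧
      |(a:ℚ)/2 - (b:ℚ)/2| ≤ ((a:ℚ)+(b:ℚ))/2 - i - j ∧
      ((a:ℚ)+(b:ℚ))/2 - i - j ≤ (a:ℚ)/2 + (b:ℚ)/2 := by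
    refine ⟨by rw [E4']; simp, ?_, by linarith⟩
    rw [abs_le]; constructor <;> linarith
  rw [if_pos hcond]
  rw [E1, E2, E3, E4, E5, E6, E7, E8, E9, E10, E11, E12]
  simp only [qfact_natCast, qfact_zero, Rat.num_natCast, Int.toNat_natCast]
  have E13 : 2 * (((((a:ℚ)+(b:ℚ))/2 - (i:ℚ) - (j:ℚ)) : ℚ) : ℝ) + 1
      = ((a + b - 2*i - 2*j + 1 : ℕ):ℝ) := by
    rw [show a + b - 2*i - 2*j + 1 = a + b - (2*i+2*j) + 1 from by omega,
      Nat.cast_add, Nat.cast_sub (by omega : 2*i+2*j ≤ a+b)]; push_cast; ring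
  rw [E13]
  have hsum : (∑ r ∈ Finset.range (i + j + 1),
        (-1:ℝ) ^ r /
          ((r.factorial : ℝ) * qfact (((i + j : ℕ):ℚ) - (r:ℚ)) * qfact ((i:ℚ) - (r:ℚ)) *
              qfact (((b - j : ℕ):ℚ) - (r:ℚ)) * qfact ((a:ℚ) - 2 * (i:ℚ) - (j:ℚ) + (r:ℚ)) *
            qfact (-(i:ℚ) + (r:ℚ))))
      = (-1:ℝ) ^ i /
          ((i.factorial : ℝ) * (j.factorial : ℝ) * 1 * ((b - i - j).factorial : ℝ) *
            ((a - i - j).factorial : ℝ) * 1) := by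
    rw [Finset.sum_eq_single_of_mem i (Finset.mem_range.mpr (by omega))]
    · congr 1
      have g1 : ((i + j : ℕ):ℚ) - (i:ℚ) = ((j:ℕ):ℚ) := by push_cast; ring
      have g2 : ((i:ℚ)) - (i:ℚ) = (0:ℚ) := by ring
      have g3 : ((b - j : ℕ):ℚ) - (i:ℚ) = ((b - i - j : ℕ):ℚ) := by
        rw [show b - i - j = b - (i+j) from by omega, Nat.cast_sub hjb,
          Nat.cast_sub (by omega : j ≤ b)]; push_cast; ring
      have g4 : (a:ℚ) - 2 * (i:ℚ) - (j:ℚ) + (i:ℚ) = ((a - i - j : ℕ):ℚ) := by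
        rw [show a - i - j = a - (i+j) from by omega, Nat.cast_sub hia]; push_cast; ring
      have g5 : -(i:ℚ) + (i:ℚ) = (0:ℚ) := by ring
      rw [g1, g2, g3, g4, g5, qfact_natCast, qfact_natCast, qfact_natCast, qfact_zero]
    · intro r hr hne
      rcases lt_or_gt_of_ne hne with h | h
      · have h' : -(i:ℚ) + (r:ℚ) < 0 := by
          have : (r:ℚ) < (i:ℚ) := by exact_mod_cast h
          linarith
        rw [qfact_of_neg h', mul_zero, div_zero]
      · have h' : (i:ℚ) - (r:ℚ) < 0 := by
          have : (i:ℚ) < (r:ℚ) := by exact_mod_cast h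
          linarith
        rw [qfact_of_neg h']
        simp
  rw [hsum]
  -- final algebra
  set X : ℝ := ((i + j).factorial : ℝ) * ((a - i - j).factorial : ℝ) * ((b - i - j).factorial : ℝ)
    with hX
  set Q : ℝ := ((a + b - i - j + 1).factorial : ℝ) with hQ
  set Y : ℝ := ((a + b - 2*i - 2*j + 1 : ℕ):ℝ) with hY
  set Z : ℝ := ((a - i).factorial : ℝ) * (i.factorial : ℝ) * ((b - j).factorial : ℝ) *
    (j.factorial : ℝ) * ((a + b - 2 * i - 2 * j).factorial : ℝ) * 1 with hZ
  set D : ℝ := (i.factorial : ℝ) * (j.factorial : ℝ) * 1 * ((b - i - j).factorial : ℝ) *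
    ((a - i - j).factorial : ℝ) * 1 with hD
  have fpos : ∀ n : ℕ, (0:ℝ) < (n.factorial : ℝ) := fun n => by
    exact_mod_cast n.factorial_pos
  have hDpos : (0:ℝ) < D := by rw [hD]; positivity
  have hQpos : (0:ℝ) < Q := fpos _
  have hXpos : (0:ℝ) ≤ X := by rw [hX]; positivity
  have hYpos : (0:ℝ) ≤ Y := by rw [hY]; positivity
  have hZpos : (0:ℝ) ≤ Z := by rw [hZ]; positivity
  have key : ((a + b - 2 * i - 2 * j + 1).factorial : ℝ) * ((i + j).factorial : ℝ)
        * ((a - i).factorial : ℝ) * ((b - j).factorial : ℝ) /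
      (((a + b - i - j + 1).factorial : ℝ) * ((a - i - j).factorial : ℝ)
        * ((b - i - j).factorial : ℝ) * (i.factorial : ℝ) * (j.factorial : ℝ))
      = X / Q * Y * Z / D ^ 2 := by
    rw [hX, hQ, hY, hZ, hD, Nat.factorial_succ (a + b - 2*i - 2*j)]
    push_cast
    field_simp
  rw [key]
  have hs : Real.sqrt (X / Q * Y * Z / D ^ 2) = Real.sqrt (X/Q) * Real.sqrt Y * Real.sqrt Z / D := by
    rw [Real.sqrt_div (by positivity) (D^2), Real.sqrt_sq hDpos.le,
      Real.sqrt_mul (by positivity) Z, Real.sqrt_mul (by positivity) Y]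
  rw [hs]; ring

/-- The extremal Clebsch-Gordan coefficient
`CG(a/2, a/2-i; b/2, b/2-j | (a+b)/2-i-j, (a+b)/2-i-j)`. -/
theorem CG_extremal_hw (a b i j : ℕ) (hia : i + j ≤ a) (hjb : i + j ≤ b) :
    CG ((a : ℚ) / 2) ((a : ℚ) / 2 - (i : ℚ)) ((b : ℚ) / 2) ((b : ℚ) / 2 - (j : ℚ))
        (((a : ℚ) + (b : ℚ)) / 2 - (i : ℚ) - (j : ℚ))
        (((a : ℚ) + (b : ℚ)) / 2 - (i : ℚ) - (j : ℚ))
      = (-1 : ℝ) ^ i *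
          Real.sqrt
            (((a + b - 2 * i - 2 * j + 1).factorial : ℝ) * ((i + j).factorial : ℝ)
                * ((a - i).factorial : ℝ) * ((b - j).factorial : ℝ) /
              (((a + b - i - j + 1).factorial : ℝ) * ((a - i - j).factorial : ℝ)
                * ((b - i - j).factorial : ℝ) * (i.factorial : ℝ) * (j.factorial : ℝ))) := by
  have hca : (i:ℚ) + (j:ℚ) ≤ (a:ℚ) := by exact_mod_cast hia
  have hcb : (i:ℚ) + (j:ℚ) ≤ (b:ℚ) := by exact_mod_cast hjb
  have hi0 : (0:ℚ) ≤ i := by positivity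
  have hj0 : (0:ℚ) ≤ j := by positivity
  have d1 : ((a:ℚ)/2 + ((a:ℚ)/2 - i)).den = 1 := by
    rw [show (a:ℚ)/2 + ((a:ℚ)/2 - i) = ((a - i : ℕ):ℚ) from by
      rw [Nat.cast_sub (by omega : i ≤ a)]; ring]
    simp
  have d2 : ((b:ℚ)/2 + ((b:ℚ)/2 - j)).den = 1 := by
    rw [show (b:ℚ)/2 + ((b:ℚ)/2 - j) = ((b - j : ℕ):ℚ) from by
      rw [Nat.cast_sub (by omega : j ≤ b)]; ring]
    simp
  have d3 : (((a:ℚ)+(b:ℚ))/2 - i - j + (((a:ℚ)+(b:ℚ))/2 - i - j)).den = 1 := by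
    rw [show ((a:ℚ)+(b:ℚ))/2 - i - j + (((a:ℚ)+(b:ℚ))/2 - i - j) = ((a + b - 2*i - 2*j : ℕ):ℚ) from by
      rw [show a + b - 2*i - 2*j = a + b - (2*i+2*j) from by omega,
        Nat.cast_sub (by omega : 2*i+2*j ≤ a+b)]; push_cast; ring]
    simp
  unfold CG
  rw [if_pos ⟨by ring, by rw [abs_le]; constructor <;> linarith,
    by rw [abs_le]; constructor <;> linarith,
    by rw [abs_le]; constructor <;> linarith, d1, d2, d3⟩]
  rw [if_pos (by linarith : (0:ℚ) ≤ ((a:ℚ)+(b:ℚ))/2 - i - j)]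
  by_cases hba : (b:ℚ)/2 ≤ (a:ℚ)/2
  · rw [if_pos hba]
    exact CGmain_extremal a b i j hia hjb _ rfl
  · rw [if_neg hba]
    rw [show (a:ℚ)/2 + (b:ℚ)/2 - (((a:ℚ)+(b:ℚ))/2 - i - j) = ((i+j : ℕ):ℚ) from by
      push_cast; ring, qsign_natCast]
    rw [CGmain_extremal b a j i (by omega) (by omega) _ (by push_cast; ring)]
    have hS : ((b + a - 2 * j - 2 * i + 1).factorial : ℝ) * ((j + i).factorial : ℝ)
          * ((b - j).factorial : ℝ) * ((a - i).factorial : ℝ) /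
        (((b + a - j - i + 1).factorial : ℝ) * ((b - j - i).factorial : ℝ)
          * ((a - j - i).factorial : ℝ) * (j.factorial : ℝ) * (i.factorial : ℝ))
        = ((a + b - 2 * i - 2 * j + 1).factorial : ℝ) * ((i + j).factorial : ℝ)
            * ((a - i).factorial : ℝ) * ((b - j).factorial : ℝ) /
          (((a + b - i - j + 1).factorial : ℝ) * ((a - i - j).factorial : ℝ)
            * ((b - i - j).factorial : ℝ) * (i.factorial : ℝ) * (j.factorial : ℝ)) := by
      rw [show b + a - 2*j - 2*i + 1 = a + b - 2*i - 2*j + 1 from by omega,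
        show j + i = i + j from by omega,
        show b + a - j - i + 1 = a + b - i - j + 1 from by omega,
        show b - j - i = b - i - j from by omega,
        show a - j - i = a - i - j from by omega]
      ring
    rw [hS, ← mul_assoc, ← pow_add, show i + j + j = i + 2*j from by omega,
      pow_add, pow_mul, show ((-1:ℝ)^2) = 1 from by norm_num, one_pow, mul_one]
end
end

section
/- Fix an integer m ≥ 1 and let V₁ and V₂ both be decreasing chains realizing duals of type-Z modules: V₁ = C(a₀,a₁,…,a_ℓ) with a_j = a₀−jm and a_ℓ ≥ 0, and V₂ = C(b₀,b₁,…,b_{ℓ'}) with b_j = b₀−jm and b_{ℓ'} ≥ 0. Then S_t(V₁,V₂) = 0 for all t ≥ 1. -/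
/-!
In a decreasing chain every step is `a_i = a_{i+1} + m`, and then `ρ^{a_i,a_{i+1}}_0` is diagonal
and `ρ^{a_i,a_{i+1}}_m` shifts indices by `m`, both with nonzero entries: these are stretched
Clebsch–Gordan coefficients, whose Racah sum has a single term. Where both chains step down, the
`e_0`- and `e_m`-equations linking neighbouring components `x_i, x_{i+1}` of an element of `S_t`
therefore force both to vanish, by induction on the first tensor index. At the ends of the admissible range one of the two
neighbours is zero by definition, and injectivity of `ρ_0 ⊗ id` (or `id ⊗ ρ_0`) kills the other.
Since `t ≥ 1`, every component has a neighbour.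
-/

noncomputable section

open scoped TensorProduct

/-- The standard sl(2)-module `V(a)` of highest weight `a`, realized on `Fin (a+1) → ℝ`. -/
abbrev Vn (a : ℕ) : Type := Fin (a + 1) → ℝ

def sl2coefE (a k : ℕ) : ℝ :=
  Real.sqrt ((a / 2 : ℝ) * (a / 2 + 1) - ((a / 2 : ℝ) - k + 1) * ((a / 2 : ℝ) - k))

def sl2coefF (a k : ℕ) : ℝ :=
  Real.sqrt ((a / 2 : ℝ) * (a / 2 + 1) - ((a / 2 : ℝ) - k - 1) * ((a / 2 : ℝ) - k))

/-- Matrix of `E` on `V(a)`: the `l`-th basis vector is sent to `sl2coefE a l` times the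
`(l-1)`-st one. -/
def matE (a : ℕ) : Matrix (Fin (a + 1)) (Fin (a + 1)) ℝ :=
  fun k l => if (k : ℕ) + 1 = (l : ℕ) then sl2coefE a (l : ℕ) else 0

/-- Matrix of `H` on `V(a)`: diagonal with entries `a - 2l`. -/
def matH (a : ℕ) : Matrix (Fin (a + 1)) (Fin (a + 1)) ℝ :=
  fun k l => if k = l then (a : ℝ) - 2 * ((l : ℕ) : ℝ) else 0

/-- Matrix of `F` on `V(a)`: the `l`-th basis vector is sent to `sl2coefF a l` times the
`(l+1)`-st one. -/
def matF (a : ℕ) : Matrix (Fin (a + 1)) (Fin (a + 1)) ℝ :=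
  fun k l => if (k : ℕ) = (l : ℕ) + 1 then sl2coefF a (l : ℕ) else 0

/-- The action of `e` on `V(a)`. -/
def opE (a : ℕ) : Vn a →ₗ[ℝ] Vn a := Matrix.toLin' (matE a)
/-- The action of `h` on `V(a)`. -/
def opH (a : ℕ) : Vn a →ₗ[ℝ] Vn a := Matrix.toLin' (matH a)
/-- The action of `f` on `V(a)`. -/
def opF (a : ℕ) : Vn a →ₗ[ℝ] Vn a := Matrix.toLin' (matF a)

/-- The standard basis vector `v_k` of `V(a)`. -/
def bv (a : ℕ) (k : Fin (a + 1)) : Vn a := Pi.single k 1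

/-- Matrix of the map `rho^{a,b}_s : V(b) → V(a)` defining the action of the basis element
`e_s` of `V(m)` on the uniserial `(sl(2) ⋉ V(m))`-module `E(a,b)`: the `j`-th basis vector of
`V(b)` is sent to `(-1)^j CG(a/2, a/2-i; b/2, -b/2+j | m/2, m/2-s)` times the `i`-th basis
vector of `V(a)`, where `i = j + s + (a-b-m)/2` (and to `0` if this `i` is out of range). -/
def rhoMat (m a b s : ℕ) : Matrix (Fin (a + 1)) (Fin (b + 1)) ℝ :=
  fun i j =>
    if 2 * ((i : ℕ) : ℤ) = 2 * ((j : ℕ) : ℤ) + 2 * (s : ℤ) + (a : ℤ) - (b : ℤ) - (m : ℤ) then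
      (-1 : ℝ) ^ (j : ℕ) *
        CG ((a : ℚ) / 2) ((a : ℚ) / 2 - ((i : ℕ) : ℚ)) ((b : ℚ) / 2)
          (-(b : ℚ) / 2 + ((j : ℕ) : ℚ)) ((m : ℚ) / 2) ((m : ℚ) / 2 - (s : ℚ))
    else 0

/-- The map `rho^{a,b}_s : V(b) → V(a)`. -/
def rho (m a b s : ℕ) : Vn b →ₗ[ℝ] Vn a := Matrix.toLin' (rhoMat m a b s)

/-- `S₁(E(a,b), E(c,d)) ⊆ (V(a) ⊗ V(d)) × (V(b) ⊗ V(c))`: the degree-one part of the socle of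
the `(sl(2) ⋉ V(m))`-module `E(a,b) ⊗ E(c,d)`, i.e. the pairs `(x,y)` with
`(id ⊗ rho^{c,d}_s) x + (rho^{a,b}_s ⊗ id) y = 0` for all `s = 0, …, m`. -/
def S1E (m a b c d : ℕ) :
    Submodule ℝ ((Vn a ⊗[ℝ] Vn d) × (Vn b ⊗[ℝ] Vn c)) :=
  ⨅ (s : ℕ) (_ : s ≤ m), LinearMap.ker
    ((TensorProduct.map LinearMap.id (rho m c d s)) ∘ₗ (LinearMap.fst ℝ _ _)
      + (TensorProduct.map (rho m a b s) LinearMap.id) ∘ₗ (LinearMap.snd ℝ _ _))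

/-- The diagonal action of an sl(2) generator `X` on `(V(a) ⊗ V(d)) × (V(b) ⊗ V(c))`. -/
def diagPair (a d b c : ℕ) (X : ∀ n, Vn n →ₗ[ℝ] Vn n) :
    ((Vn a ⊗[ℝ] Vn d) × (Vn b ⊗[ℝ] Vn c)) →ₗ[ℝ] ((Vn a ⊗[ℝ] Vn d) × (Vn b ⊗[ℝ] Vn c)) :=
  LinearMap.prodMap
    (TensorProduct.map (X a) LinearMap.id + TensorProduct.map LinearMap.id (X d))
    (TensorProduct.map (X b) LinearMap.id + TensorProduct.map LinearMap.id (X c))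

/-- `S ≅ V(μ)` as sl(2)-modules, where the ambient space `M` of `S` carries the sl(2)-action
`DE, DH, DF`: there is an injective linear map `V(μ) → M` with range `S` intertwining the
standard action on `V(μ)` with `DE, DH, DF`. -/
def IsoToV (μ : ℕ) {M : Type} [AddCommGroup M] [Module ℝ M]
    (DE DH DF : M →ₗ[ℝ] M) (S : Submodule ℝ M) : Prop :=
  ∃ ψ : Vn μ →ₗ[ℝ] M, Function.Injective ψ ∧ LinearMap.range ψ = S ∧
    ψ ∘ₗ opE μ = DE ∘ₗ ψ ∧ ψ ∘ₗ opH μ = DH ∘ₗ ψ ∧ ψ ∘ₗ opF μ = DF ∘ₗ ψ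

/-- The degree-`t` component of the tensor product of two chain modules whose sl(2)-socle
factors are `V(a 0), V(a 1), …` and `V(b 0), V(b 1), …`. -/
abbrev chainSpace (a b : ℕ → ℕ) (t : ℕ) : Type :=
  ∀ i : Fin (t + 1), Vn (a (i : ℕ)) ⊗[ℝ] Vn (b (t - (i : ℕ)))

/-- `S_t` for the tensor product of the chain modules `C(a 0, …, a l)` and `C(b 0, …, b l')`
over `sl(2) ⋉ V(m)`: the set of tuples `(x_i)` in the degree-`t` component whose entries
outside the admissible index range vanish and which are annihilated by every `e_s`, i.e.
`(rho^{a_i,a_{i+1}}_s ⊗ id) x_{i+1} + (id ⊗ rho^{b_{t-i-1},b_{t-i}}_s) x_i = 0`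
for all `0 ≤ s ≤ m` and all `i < t`. -/
def chainSt (m : ℕ) (a b : ℕ → ℕ) (l l' t : ℕ) : Submodule ℝ (chainSpace a b t) :=
  (⨅ (i : Fin (t + 1)) (_ : l < (i : ℕ) ∨ l' < t - (i : ℕ)),
    LinearMap.ker (LinearMap.proj (R := ℝ) i))
  ⊓ ⨅ (s : ℕ) (_ : s ≤ m) (i : ℕ) (h : i < t), LinearMap.ker
      ((TensorProduct.map (rho m (a i) (a (i + 1)) s) LinearMap.id) ∘ₗ
          LinearMap.proj (R := ℝ) (⟨i + 1, by omega⟩ : Fin (t + 1))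
        + (TensorProduct.map LinearMap.id (rho m (b (t - i - 1)) (b (t - i)) s)) ∘ₗ
          LinearMap.proj (R := ℝ) (⟨i, by omega⟩ : Fin (t + 1)))

/-- The diagonal action of an sl(2) generator `X` on the degree-`t` component. -/
def chainD (a b : ℕ → ℕ) (t : ℕ) (X : ∀ n, Vn n →ₗ[ℝ] Vn n) :
    chainSpace a b t →ₗ[ℝ] chainSpace a b t :=
  LinearMap.pi fun i =>
    (TensorProduct.map (X (a (i : ℕ))) LinearMap.id
      + TensorProduct.map LinearMap.id (X (b (t - (i : ℕ))))) ∘ₗ LinearMap.proj (R := ℝ) i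

/-- The componentwise sl(2)-action of a generator `X` on the direct sum `⊕_{k<K} V(f k)`. -/
def piOp (f : ℕ → ℕ) (K : ℕ) (X : ∀ n, Vn n →ₗ[ℝ] Vn n) :
    (∀ k : Fin K, Vn (f (k : ℕ))) →ₗ[ℝ] (∀ k : Fin K, Vn (f (k : ℕ))) :=
  LinearMap.pi fun k => X (f (k : ℕ)) ∘ₗ LinearMap.proj (R := ℝ) k

/-- `S ≅ ⊕_{k<K} V(f k)` as sl(2)-modules (same convention as `IsoToV`). -/
def IsoToPi (f : ℕ → ℕ) (K : ℕ) {M : Type} [AddCommGroup M] [Module ℝ M]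
    (DE DH DF : M →ₗ[ℝ] M) (S : Submodule ℝ M) : Prop :=
  ∃ ψ : (∀ k : Fin K, Vn (f (k : ℕ))) →ₗ[ℝ] M,
    Function.Injective ψ ∧ LinearMap.range ψ = S ∧
    ψ ∘ₗ piOp f K opE = DE ∘ₗ ψ ∧ ψ ∘ₗ piOp f K opH = DH ∘ₗ ψ ∧ ψ ∘ₗ piOp f K opF = DF ∘ₗ ψ

lemma qfact_pos_of_eq {q : ℚ} {n : ℕ} (h : q = n) : 0 < qfact q := by
  subst h; simp [qfact, Nat.factorial_pos]

lemma qfact_eq_zero_of_eq {q : ℚ} {n : ℤ} (h : q = n) (hn : n < 0) : qfact q = 0 := by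
  subst h; rw [qfact, if_neg]; rintro ⟨-, h⟩; rw [Rat.num_intCast] at h; omega

lemma qfact_eq_factorial_of_eq {q : ℚ} {n : ℕ} (h : q = n) : qfact q = n.factorial := by
  subst h; simp [qfact]

lemma den_eq_one_of_eq {q : ℚ} {n : ℕ} (h : q = n) : q.den = 1 := by
  subst h; exact Rat.den_natCast n

lemma qsign_ne_zero (q : ℚ) : qsign q ≠ 0 := by
  unfold qsign; split
  · exact zpow_ne_zero _ (by norm_num)
  · exact one_ne_zero

lemma cgDelta_stretched_ne_zero (c d m : ℕ) :
    cgDelta (((c:ℚ)+d+m)/2) (((c:ℚ)+d)/2) ((m:ℚ)/2) ≠ 0 := by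
  have hm : (0:ℚ) ≤ m := m.cast_nonneg
  have hcd : (0:ℚ) ≤ c + d := by positivity
  rw [cgDelta, if_pos ⟨den_eq_one_of_eq (n := c + d + m) (by push_cast; ring),
    by rw [abs_le]; constructor <;> linarith, by linarith⟩, Real.sqrt_ne_zero']
  have := qfact_pos_of_eq (n := c + d) (q := ((c:ℚ)+d+m)/2 + ((c:ℚ)+d)/2 - (m:ℚ)/2)
    (by push_cast; ring)
  have := qfact_pos_of_eq (n := m) (q := ((c:ℚ)+d+m)/2 - ((c:ℚ)+d)/2 + (m:ℚ)/2) (by ring)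
  have := qfact_pos_of_eq (n := 0) (q := -(((c:ℚ)+d+m)/2) + ((c:ℚ)+d)/2 + (m:ℚ)/2) (by ring)
  have := qfact_pos_of_eq (n := c + d + m + 1)
    (q := ((c:ℚ)+d+m)/2 + ((c:ℚ)+d)/2 + (m:ℚ)/2 + 1) (by push_cast; ring)
  positivity

/-- In the stretched case `j₁ = j₂ + j₃`, `m₃ = j₃`, only `r = c` survives in the sum. -/
lemma CGmain_stretched_ne_zero (c d m : ℕ) :
    CGmain (((c:ℚ)+d+m)/2) (((c:ℚ)+d+m)/2 - c) (((c:ℚ)+d)/2) (((c:ℚ)+d)/2 - d)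
      ((m:ℚ)/2) ((m:ℚ)/2) ≠ 0 := by
  have hnorm : Real.sqrt (2 * (((m:ℚ)/2 : ℚ) : ℝ) + 1) ≠ 0 := by
    rw [Real.sqrt_ne_zero']; push_cast; positivity
  have hfact : Real.sqrt (qfact (((c:ℚ)+d+m)/2 + (((c:ℚ)+d+m)/2 - c)) *
      qfact (((c:ℚ)+d+m)/2 - (((c:ℚ)+d+m)/2 - c)) *
      qfact (((c:ℚ)+d)/2 + (((c:ℚ)+d)/2 - d)) *
      qfact (((c:ℚ)+d)/2 - (((c:ℚ)+d)/2 - d)) * qfact ((m:ℚ)/2 + (m:ℚ)/2) *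
      qfact ((m:ℚ)/2 - (m:ℚ)/2)) ≠ 0 := by
    rw [Real.sqrt_ne_zero']
    have := qfact_pos_of_eq (n := d + m) (q := ((c:ℚ)+d+m)/2 + (((c:ℚ)+d+m)/2 - c))
      (by push_cast; ring)
    have := qfact_pos_of_eq (n := c) (q := ((c:ℚ)+d+m)/2 - (((c:ℚ)+d+m)/2 - c)) (by ring)
    have := qfact_pos_of_eq (n := c) (q := ((c:ℚ)+d)/2 + (((c:ℚ)+d)/2 - d)) (by ring)
    have := qfact_pos_of_eq (n := d) (q := ((c:ℚ)+d)/2 - (((c:ℚ)+d)/2 - d)) (by ring)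
    have := qfact_pos_of_eq (n := m) (q := (m:ℚ)/2 + (m:ℚ)/2) (by ring)
    have := qfact_pos_of_eq (n := 0) (q := (m:ℚ)/2 - (m:ℚ)/2) (by simp)
    positivity
  refine mul_ne_zero (mul_ne_zero (mul_ne_zero (cgDelta_stretched_ne_zero c d m) hnorm) hfact)
    ?_
  rw [show ((c:ℚ)+d+m)/2 + ((c:ℚ)+d)/2 - (m:ℚ)/2 = ((c + d : ℕ) : ℚ) by push_cast; ring,
    Rat.num_natCast, Int.toNat_natCast, Finset.sum_eq_single c]
  · rw [qfact_eq_factorial_of_eq (n := d) (by push_cast; ring),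
      qfact_eq_factorial_of_eq (n := 0) (by ring), qfact_eq_factorial_of_eq (n := 0) (by ring),
      qfact_eq_factorial_of_eq (n := m) (by ring), qfact_eq_factorial_of_eq (n := 0) (by ring)]
    exact div_ne_zero (pow_ne_zero _ (by norm_num)) (by positivity)
  · intro r _ hr
    rcases lt_or_gt_of_ne hr with h | h
    · rw [qfact_eq_zero_of_eq (n := (r:ℤ) - c)
        (q := (m:ℚ)/2 - ((c:ℚ)+d+m)/2 - (((c:ℚ)+d)/2 - d) + r) (by push_cast; ring)
        (by omega)]
      simp
    · rw [qfact_eq_zero_of_eq (n := (c:ℤ) - r)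
        (q := ((c:ℚ)+d+m)/2 - (((c:ℚ)+d+m)/2 - c) - r) (by push_cast; ring) (by omega)]
      simp
  · intro hc; exact absurd (Finset.mem_range.mpr (by omega)) hc

lemma CG_stretched_ne_zero (c d m : ℕ) :
    CG (((c:ℚ)+d+m)/2) (((c:ℚ)+d+m)/2 - c) (((c:ℚ)+d)/2) (((c:ℚ)+d)/2 - d)
      ((m:ℚ)/2) ((m:ℚ)/2) ≠ 0 := by
  have hc : (0:ℚ) ≤ c := c.cast_nonneg
  have hd : (0:ℚ) ≤ d := d.cast_nonneg
  have hm : (0:ℚ) ≤ m := m.cast_nonneg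
  rw [CG, if_pos ⟨by ring, by rw [abs_le]; constructor <;> linarith,
      by rw [abs_le]; constructor <;> linarith, by rw [abs_le]; constructor <;> linarith,
      den_eq_one_of_eq (n := d + m) (by push_cast; ring), den_eq_one_of_eq (n := c) (by ring),
      den_eq_one_of_eq (n := m) (by ring)⟩, if_pos (by positivity), if_pos (by linarith)]
  exact CGmain_stretched_ne_zero c d m

lemma CG_stretched_neg_ne_zero {m : ℕ} (hm : 1 ≤ m) (c d : ℕ) :
    CG (((c:ℚ)+d+m)/2) (-(((c:ℚ)+d+m)/2 - c)) (((c:ℚ)+d)/2) (-(((c:ℚ)+d)/2 - d))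
      ((m:ℚ)/2) (-((m:ℚ)/2)) ≠ 0 := by
  have hc : (0:ℚ) ≤ c := c.cast_nonneg
  have hd : (0:ℚ) ≤ d := d.cast_nonneg
  have hm : (1:ℚ) ≤ m := by exact_mod_cast hm
  rw [CG, if_pos ⟨by ring, by rw [abs_le]; constructor <;> linarith,
      by rw [abs_le]; constructor <;> linarith, by rw [abs_le]; constructor <;> linarith,
      den_eq_one_of_eq (n := c) (by ring), den_eq_one_of_eq (n := d) (by ring),
      den_eq_one_of_eq (n := 0) (by simp)⟩, if_neg (by linarith), if_pos (by linarith),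
    neg_neg, neg_neg, neg_neg]
  exact mul_ne_zero (qsign_ne_zero _) (CGmain_stretched_ne_zero c d m)

section rhoMat

variable {m a b : ℕ} {i : Fin (a + 1)} {j : Fin (b + 1)}

lemma rhoMat_zero_apply_eq_zero (hab : a = b + m) (h : (i : ℕ) ≠ j) :
    rhoMat m a b 0 i j = 0 := by
  rw [rhoMat, if_neg (by omega)]

lemma rhoMat_last_apply_eq_zero (hab : a = b + m) (h : (i : ℕ) ≠ j + m) :
    rhoMat m a b m i j = 0 := by
  rw [rhoMat, if_neg (by omega)]

lemma rhoMat_zero_apply_ne_zero (hab : a = b + m) (h : (i : ℕ) = j) :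
    rhoMat m a b 0 i j ≠ 0 := by
  subst hab
  have hj : (j : ℕ) ≤ b := Nat.lt_succ_iff.mp j.isLt
  rw [rhoMat, if_pos (by omega)]
  refine mul_ne_zero (pow_ne_zero _ (by norm_num)) ?_
  convert CG_stretched_ne_zero j (b - j) m using 2 <;> push_cast [h, Nat.cast_sub hj] <;> ring

lemma rhoMat_last_apply_ne_zero (hm : 1 ≤ m) (hab : a = b + m) (h : (i : ℕ) = j + m) :
    rhoMat m a b m i j ≠ 0 := by
  subst hab
  have hj : (j : ℕ) ≤ b := Nat.lt_succ_iff.mp j.isLt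
  rw [rhoMat, if_pos (by omega)]
  refine mul_ne_zero (pow_ne_zero _ (by norm_num)) ?_
  convert CG_stretched_neg_ne_zero hm (b - j) j using 2 <;> push_cast [h, Nat.cast_sub hj] <;> ring

end rhoMat

lemma eq_zero_of_sum_mul_eq_zero {ι : Type*} [Fintype ι] {c g : ι → ℝ} {j : ι}
    (h : ∑ p, c p * g p = 0) (hc : ∀ p, p ≠ j → c p = 0) (hj : c j ≠ 0) : g j = 0 := by
  rw [Fintype.sum_eq_single j fun p hp => by rw [hc p hp, zero_mul]] at h
  exact (mul_eq_zero.mp h).resolve_left hj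

lemma rho_zero_injective {m a b : ℕ} (hab : a = b + m) : Function.Injective (rho m a b 0) := by
  rw [injective_iff_map_eq_zero]
  intro v hv
  funext j
  have hj : (j : ℕ) < a + 1 := by omega
  refine eq_zero_of_sum_mul_eq_zero (c := rhoMat m a b 0 ⟨j, hj⟩) ?_
    (fun p hp => rhoMat_zero_apply_eq_zero hab fun h => hp (Fin.ext h.symm))
    (rhoMat_zero_apply_ne_zero hab rfl)
  simpa [rho, Matrix.toLin'_apply, Matrix.mulVec, dotProduct] using congrFun hv ⟨j, hj⟩

open TensorProduct

def tensorCoord {a b : ℕ} (j : Fin (a + 1)) (k : Fin (b + 1)) :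
    Vn a ⊗[ℝ] Vn b →ₗ[ℝ] ℝ :=
  Finsupp.lapply (j, k) ∘ₗ
    ((Pi.basisFun ℝ (Fin (a + 1))).tensorProduct (Pi.basisFun ℝ (Fin (b + 1)))).repr.toLinearMap

section tensorCoord

variable {a b : ℕ}

@[simp]
lemma tensorCoord_tmul (j : Fin (a + 1)) (k : Fin (b + 1)) (v : Vn a) (w : Vn b) :
    tensorCoord j k (v ⊗ₜ w) = v j * w k := by
  simp [tensorCoord, mul_comm]

lemma eq_zero_of_tensorCoord {x : Vn a ⊗[ℝ] Vn b} (h : ∀ j k, tensorCoord j k x = 0) :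
    x = 0 := by
  refine (LinearEquiv.map_eq_zero_iff
    ((Pi.basisFun ℝ (Fin (a + 1))).tensorProduct (Pi.basisFun ℝ (Fin (b + 1)))).repr).mp ?_
  ext ⟨j, k⟩
  exact h j k

lemma tensorCoord_map_left {a' : ℕ} (A : Matrix (Fin (a + 1)) (Fin (a' + 1)) ℝ)
    (x : Vn a' ⊗[ℝ] Vn b) (j : Fin (a + 1)) (k : Fin (b + 1)) :
    tensorCoord j k (map (Matrix.toLin' A) LinearMap.id x) = ∑ p, A j p * tensorCoord p k x := by
  induction x using TensorProduct.induction_on with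
  | zero => simp
  | tmul v w => simp [Matrix.toLin'_apply, Matrix.mulVec, dotProduct, Finset.sum_mul, mul_assoc]
  | add u v hu hv => simp [hu, hv, Finset.sum_add_distrib, mul_add]

lemma tensorCoord_map_right {b' : ℕ} (B : Matrix (Fin (b + 1)) (Fin (b' + 1)) ℝ)
    (x : Vn a ⊗[ℝ] Vn b') (j : Fin (a + 1)) (k : Fin (b + 1)) :
    tensorCoord j k (map LinearMap.id (Matrix.toLin' B) x) = ∑ q, B k q * tensorCoord j q x := by
  induction x using TensorProduct.induction_on with
  | zero => simp
  | tmul v w =>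
    simp [Matrix.toLin'_apply, Matrix.mulVec, dotProduct, Finset.mul_sum, mul_left_comm]
  | add u v hu hv => simp [hu, hv, Finset.sum_add_distrib, mul_add]

end tensorCoord

section S1E

variable {m a b c d : ℕ} {x : Vn a ⊗[ℝ] Vn d} {y : Vn b ⊗[ℝ] Vn c}

lemma mem_S1E_iff : (x, y) ∈ S1E m a b c d ↔
    ∀ s ≤ m, map LinearMap.id (rho m c d s) x + map (rho m a b s) LinearMap.id y = 0 := by
  simp [S1E]

lemma tensorCoord_eq_of_mem_S1E (hxy : (x, y) ∈ S1E m a b c d) {s : ℕ} (hs : s ≤ m)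
    (J : Fin (a + 1)) (K : Fin (c + 1)) :
    ∑ q, rhoMat m c d s K q * tensorCoord J q x + ∑ p, rhoMat m a b s J p * tensorCoord p K y
      = 0 := by
  simpa [tensorCoord_map_left, tensorCoord_map_right, rho] using
    congrArg (tensorCoord J K) (mem_S1E_iff.mp hxy s hs)

lemma S1E_fst_eq_zero_of_decr (hm : 1 ≤ m) (hab : a = b + m) (hcd : c = d + m)
    (hxy : (x, y) ∈ S1E m a b c d) : x = 0 := by
  subst hab hcd
  refine eq_zero_of_tensorCoord fun j => ?_
  induction j using WellFoundedLT.induction with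
  | _ j ih =>
    intro k
    let K : Fin (d + m + 1) := ⟨k + m, by omega⟩
    have hy : ∀ p : Fin (b + 1), (p : ℕ) + m = j → tensorCoord p K y = 0 := by
      intro p hp
      have hp' : (p : ℕ) < b + m + 1 := by omega
      refine eq_zero_of_sum_mul_eq_zero (c := rhoMat m (b + m) b 0 ⟨p, hp'⟩)
        (g := fun p' => tensorCoord p' K y) ?_
        (fun p' hp'' => rhoMat_zero_apply_eq_zero rfl fun h => hp'' (Fin.ext h.symm))
        (rhoMat_zero_apply_ne_zero rfl rfl)
      have := tensorCoord_eq_of_mem_S1E hxy (Nat.zero_le m) ⟨p, hp'⟩ K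
      rwa [Finset.sum_eq_zero fun q _ => by
        rw [ih ⟨p, hp'⟩ (Fin.lt_def.mpr (by simp; omega)) q, mul_zero], zero_add] at this
    refine eq_zero_of_sum_mul_eq_zero (c := rhoMat m (d + m) d m K)
      (g := fun q => tensorCoord j q x) ?_
      (fun q hq => rhoMat_last_apply_eq_zero rfl fun h =>
        hq (Fin.ext (by simp [K] at h; omega)))
      (rhoMat_last_apply_ne_zero hm rfl rfl)
    have hy_side : ∑ p, rhoMat m (b + m) b m j p * tensorCoord p K y = 0 :=
      Finset.sum_eq_zero fun p _ => by
        by_cases hp : (p : ℕ) + m = j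
        · rw [hy p hp, mul_zero]
        · rw [rhoMat_last_apply_eq_zero rfl (by omega), zero_mul]
    have := tensorCoord_eq_of_mem_S1E hxy le_rfl j K
    rwa [hy_side, add_zero] at this

lemma S1E_fst_eq_zero (hm : 1 ≤ m) (hcd : c = d + m) (hxy : (x, y) ∈ S1E m a b c d)
    (hy : a = b + m ∨ y = 0) : x = 0 := by
  rcases hy with hab | rfl
  · exact S1E_fst_eq_zero_of_decr hm hab hcd hxy
  · have hx := mem_S1E_iff.mp hxy 0 (Nat.zero_le m)
    rw [map_zero, add_zero] at hx
    exact Module.Flat.lTensor_preserves_injective_linearMap _ (rho_zero_injective hcd)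
      (hx.trans (map_zero _).symm)

lemma S1E_snd_eq_zero (hm : 1 ≤ m) (hab : a = b + m) (hxy : (x, y) ∈ S1E m a b c d)
    (hx : c = d + m ∨ x = 0) : y = 0 := by
  obtain rfl : x = 0 := hx.elim (fun hcd => S1E_fst_eq_zero_of_decr hm hab hcd hxy) id
  have hy := mem_S1E_iff.mp hxy 0 (Nat.zero_le m)
  rw [map_zero, zero_add] at hy
  exact Module.Flat.rTensor_preserves_injective_linearMap _ (rho_zero_injective hab)
    (hy.trans (map_zero _).symm)

end S1E

section chainSt

variable {m : ℕ} {a b : ℕ → ℕ} {l l' t : ℕ} {x : chainSpace a b t}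

lemma chainSt_apply_eq_zero (hx : x ∈ chainSt m a b l l' t) (i : Fin (t + 1))
    (hi : l < i ∨ l' < t - i) : x i = 0 := by
  have := (Submodule.mem_inf.mp hx).1
  simp only [Submodule.mem_iInf, LinearMap.mem_ker, LinearMap.proj_apply] at this
  exact this i hi

lemma mem_S1E_of_mem_chainSt (hx : x ∈ chainSt m a b l l' t) (i : ℕ) (hi : i < t) :
    (x ⟨i, by omega⟩, x ⟨i + 1, by omega⟩) ∈
      S1E m (a i) (a (i + 1)) (b (t - i - 1)) (b (t - i)) := by
  have := (Submodule.mem_inf.mp hx).2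
  simp only [Submodule.mem_iInf, LinearMap.mem_ker, LinearMap.add_apply, LinearMap.coe_comp,
    Function.comp_apply, LinearMap.proj_apply] at this
  exact mem_S1E_iff.mpr fun s hs => (add_comm _ _).trans (this s hs i hi)

end chainSt

lemma sub_mul_eq_sub_mul_add {a₀ m l j k : ℕ} (hl : l * m ≤ a₀) (hk : k = j + 1)
    (hkl : k ≤ l) :
    a₀ - j * m = a₀ - k * m + m := by
  subst hk
  have := (Nat.mul_le_mul_right m hkl).trans hl
  rw [add_mul, one_mul] at this ⊢
  omega

/-- Theorem 4.2(iii): for two decreasing chains `V₁ = C(a₀, a₀-m, …, a₀-lm)` and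
`V₂ = C(b₀, b₀-m, …, b₀-l'm)` (realizing duals of type-Z modules): `S_t = 0` for all `t ≥ 1`. -/
theorem St_Z_decr_decr (m a₀ b₀ l l' : ℕ) (hm : 1 ≤ m)
    (hal : l * m ≤ a₀) (hbl : l' * m ≤ b₀) :
    ∀ t : ℕ, 1 ≤ t →
      chainSt m (fun i => a₀ - i * m) (fun j => b₀ - j * m) l l' t = ⊥ := by
  intro t ht
  refine eq_bot_iff.mpr fun x hx => (Submodule.mem_bot ℝ).mpr (funext fun i => ?_)
  by_cases hout : l < i ∨ l' < t - i
  · exact chainSt_apply_eq_zero hx i hout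
  push Not at hout
  rcases Nat.lt_or_ge i t with hit | hit
  · refine S1E_fst_eq_zero hm (sub_mul_eq_sub_mul_add hbl (by omega) hout.2)
      (mem_S1E_of_mem_chainSt hx i hit) ?_
    rcases Nat.lt_or_ge i l with hil | hil
    · exact .inl (sub_mul_eq_sub_mul_add hal rfl hil)
    · exact .inr (chainSt_apply_eq_zero hx ⟨i + 1, by omega⟩ (.inl (by simp; omega)))
  · obtain ⟨k, rfl⟩ : ∃ k, t = k + 1 := ⟨t - 1, by omega⟩
    obtain rfl : i = Fin.last (k + 1) := Fin.ext (by simp only [Fin.val_last]; omega)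
    refine S1E_snd_eq_zero hm (sub_mul_eq_sub_mul_add hal rfl hout.1)
      (mem_S1E_of_mem_chainSt hx k (by omega)) ?_
    rcases Nat.lt_or_ge 0 l' with hl' | hl'
    · exact .inl (sub_mul_eq_sub_mul_add hbl (by omega) (by omega))
    · exact .inr (chainSt_apply_eq_zero hx ⟨k, by omega⟩ (.inr (by simp; omega)))
end
end
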